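/- With ψ = Π_a (1 - θ^a ⊗ (ι_a + √-1 f_a^b ι_b)) acting on W(g) ⊗ Ω*(M) ⊗ ℂ, for each k one has the intertwining relation ψ ∘ (i_k ⊗ 1) = (i_k ⊗ 1 + 1 ⊗ (ι_k + √-1 f_k^j ι_j)) ∘ ψ. -/
import Mathlib

private lemma aux_prod {R : Type*} [Ring R] {n : ℕ} (k : Fin n) (F : Fin n → R) (X D : R)
    (hD : ∀ a, F a * D = D * F a)
    (hDF : D * F k = D)
    (hX : ∀ a, F a * X = X * F a + (if a = k then D else 0)) :
    ∀ l : List (Fin n), (l.map F).prod * X = (X + (l.count k) • D) * (l.map F).prod := by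
  intro l
  induction l with
  | nil => simp
  | cons a t ih =>
    simp only [List.map_cons, List.prod_cons, List.count_cons]
    rw [mul_assoc, ih, ← mul_assoc, ← mul_assoc]
    have key : F a * (X + (t.count k) • D)
        = (X + (t.count k + if a = k then 1 else 0) • D) * F a
          + (if a = k then D - D * F a else 0) := by
      rw [mul_add, hX a, mul_smul_comm, hD a, ← smul_mul_assoc, add_smul, add_mul, add_mul]
      by_cases h : a = k <;> simp [h] <;> abel
    rw [key, add_mul]
    by_cases h : a = k
    · subst h
      simp only [if_pos rfl, beq_self_eq_true, if_true, sub_mul, mul_assoc, hDF]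
      abel
    · simp [h]

/-- On `W(g) ⊗ Ω*(M) ⊗ ℂ`, with `Θ a` left multiplication by
`θ^a ⊗ 1`, `Iw k` the Weil contraction `i_k ⊗ 1`, and `Im j` the de Rham contraction
`1 ⊗ ι_j` (with Koszul signs), satisfying the Clifford relations
`Iw k Θ a + Θ a Iw k = δ_{ka}` and the anticommutation relations among the odd
operators, the map `ψ = Π_a (1 - θ^a ⊗ (ι_a + √-1 f_a^b ι_b))` satisfies the
intertwining relation `ψ ∘ (i_k ⊗ 1) = (i_k ⊗ 1 + 1 ⊗ (ι_k + √-1 f_k^j ι_j)) ∘ ψ`. -/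
theorem stmt_16 {B : Type*} [AddCommGroup B] [Module ℂ B] (n : ℕ)
    (Θ Iw Im : Fin n → Module.End ℂ B) (f : Fin n → Fin n → ℝ)
    (hClifford : ∀ k a, Iw k * Θ a + Θ a * Iw k = if k = a then 1 else 0)
    (hIwIm : ∀ k j, Iw k * Im j = - (Im j * Iw k))
    (hIwIw : ∀ k l, Iw k * Iw l = - (Iw l * Iw k))
    (hΘIm : ∀ a j, Θ a * Im j = - (Im j * Θ a))
    (hΘΘ : ∀ a b, Θ a * Θ b = - (Θ b * Θ a))
    (hImIm : ∀ a b, Im a * Im b = - (Im b * Im a))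
    (k : Fin n) :
    (List.ofFn fun a : Fin n => (1 : Module.End ℂ B)
        - Θ a * (Im a + Complex.I • ∑ b, (f a b : ℂ) • Im b)).prod * Iw k
      = (Iw k + Im k + Complex.I • ∑ j, (f k j : ℂ) • Im j) *
        (List.ofFn fun a : Fin n => (1 : Module.End ℂ B)
          - Θ a * (Im a + Complex.I • ∑ b, (f a b : ℂ) • Im b)).prod := by
  set M : Fin n → Module.End ℂ B :=
    fun a => Im a + Complex.I • ∑ b, (f a b : ℂ) • Im b with hM
  set F : Fin n → Module.End ℂ B := fun a => 1 - Θ a * M a with hF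
  have key : ∀ (P : Module.End ℂ B), (∀ j, P * Im j = - (Im j * P)) →
      ∀ a, P * M a = - (M a * P) := by
    intro P hP a
    simp only [hM, mul_add, add_mul, mul_smul_comm, smul_mul_assoc,
      Finset.mul_sum, Finset.sum_mul, hP, mul_neg, smul_neg, Finset.sum_neg_distrib,
      neg_add]
  have hIwM : ∀ j a, Iw j * M a = - (M a * Iw j) := fun j => key (Iw j) (hIwIm j)
  have hΘM : ∀ j a, Θ j * M a = - (M a * Θ j) := fun j => key (Θ j) (hΘIm j)
  have hImM : ∀ j a, Im j * M a = - (M a * Im j) := fun j => key (Im j) (hImIm j)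
  have hMM : ∀ j a, M j * M a = - (M a * M j) := by
    intro j a
    refine key (M j) (fun i => ?_) a
    rw [hImM i j, neg_neg]
  have hMΘ : ∀ j a, M j * Θ a = - (Θ a * M j) := by
    intro j a
    rw [hΘM a j, neg_neg]
  have hMsq : ∀ a, M a * M a = 0 := by
    intro a
    have h := hMM a a
    have h2 : (2 : ℂ) • (M a * M a) = 0 := by
      rw [two_smul, add_eq_zero_iff_eq_neg]
      exact h
    have := smul_eq_zero.mp h2
    simpa using this
  have hD : ∀ a, F a * M k = M k * F a := by
    intro a
    simp only [hF, sub_mul, mul_sub, one_mul, mul_one]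
    congr 1
    rw [← mul_assoc (M k) (Θ a) (M a), hMΘ k a, neg_mul, mul_assoc (Θ a) (M k) (M a),
      hMM k a, mul_neg, neg_neg, ← mul_assoc]
  have hDF : M k * F k = M k := by
    simp only [hF, mul_sub, mul_one]
    rw [← mul_assoc, hMΘ k k, neg_mul, mul_assoc, hMsq k, mul_zero, neg_zero, sub_zero]
  have hX : ∀ a, F a * Iw k = Iw k * F a + (if a = k then M k else 0) := by
    intro a
    have hcl : Iw k * Θ a = (if k = a then 1 else 0) - Θ a * Iw k := by
      rw [eq_sub_iff_add_eq]; exact hClifford k a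
    simp only [hF, sub_mul, mul_sub, one_mul, mul_one, mul_assoc]
    rw [← mul_assoc (Iw k), hcl, sub_mul, mul_assoc, hIwM k a, mul_neg, ← mul_assoc]
    by_cases h : a = k
    · subst h
      rw [if_pos rfl, if_pos rfl, one_mul]
      abel
    · rw [if_neg h, if_neg (Ne.symm h), zero_mul]
      abel
  have main := aux_prod k F (Iw k) (M k) hD hDF hX (List.finRange n)
  have hcount : (List.finRange n).count k = 1 :=
    List.count_eq_one_of_mem (List.nodup_finRange n) (List.mem_finRange k)
  rw [List.ofFn_eq_map, main, hcount, one_smul]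
  congr 1
  rw [add_assoc]
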